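/- arXiv:math/0607280 — 8 statements merged into one kernel-verified Lean document; each statement's English description precedes it below -/
import Mathlib

section
/- The trace monoid M(Σ,θ) splits as a product M(Σ,θ) = L · M(B,θ_B), where L is the submonoid of traces whose terminal alphabet is contained in Σ\B; i.e., every trace t ∈ M(Σ,θ) can be written as t = l·m with l ∈ L and m ∈ M(B,θ_B). -/
/-- The relation `ab ~ ba` for commuting pairs `(a,b) ∈ θ`. -/
def traceRel {α : Type} (θ : α → α → Prop) : FreeMonoid α → FreeMonoid α → Prop :=
  fun u v => ∃ a b, θ a b ∧ u = FreeMonoid.of a * FreeMonoid.of b ∧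
    v = FreeMonoid.of b * FreeMonoid.of a

/-- The trace congruence generated by `ab ~ ba` for `(a,b) ∈ θ`. -/
def traceCon {α : Type} (θ : α → α → Prop) : Con (FreeMonoid α) := conGen (traceRel θ)

/-- The trace monoid `M(Σ,θ)`. -/
abbrev TraceMonoid {α : Type} (θ : α → α → Prop) := (traceCon θ).Quotient

/-- The canonical surjection `φ : Σ* → M(Σ,θ)`. -/
def phi {α : Type} (θ : α → α → Prop) : FreeMonoid α →* TraceMonoid θ := (traceCon θ).mk'

/-- The terminal alphabet of a trace. -/
def TA {α : Type} (θ : α → α → Prop) (t : TraceMonoid θ) : Set α :=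
  {x | ∃ u : TraceMonoid θ, t = u * phi θ (FreeMonoid.of x)}

/-- The left Lazard factor: traces whose terminal alphabet avoids `B`. -/
def leftFactor {α : Type} (θ : α → α → Prop) (B : Set α) : Set (TraceMonoid θ) :=
  {t | TA θ t ∩ B = ∅}

/-- The submonoid of `M(Σ,θ)` generated by the letters of `B`,
identified with `M(B,θ_B)`. -/
def subTrace {α : Type} (θ : α → α → Prop) (B : Set α) : Submonoid (TraceMonoid θ) :=
  Submonoid.closure ((fun x => phi θ (FreeMonoid.of x)) '' B)

def traceLength {α : Type} (θ : α → α → Prop) : TraceMonoid θ →* Multiplicative ℕ :=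
  (traceCon θ).lift (FreeMonoid.lift fun _ => Multiplicative.ofAdd 1) <| Con.conGen_le.2 <| by
    rintro _ _ ⟨a, b, -, rfl, rfl⟩
    simp only [Con.ker_rel, map_mul, mul_comm]

theorem traceLength_phi_of {α : Type} (θ : α → α → Prop) (x : α) :
    traceLength θ (phi θ (FreeMonoid.of x)) = Multiplicative.ofAdd 1 :=
  rfl

theorem toAdd_traceLength_mul_phi_of {α : Type} (θ : α → α → Prop) (u : TraceMonoid θ) (x : α) :
    (traceLength θ (u * phi θ (FreeMonoid.of x))).toAdd = (traceLength θ u).toAdd + 1 := by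
  rw [map_mul, traceLength_phi_of, toAdd_mul, toAdd_ofAdd]

theorem lazard_bisection_exists_general {α : Type} (θ : α → α → Prop) (B : Set α)
    (t : TraceMonoid θ) :
    ∃ l m : TraceMonoid θ, l ∈ leftFactor θ B ∧ m ∈ subTrace θ B ∧ t = l * m := by
  induction hn : (traceLength θ t).toAdd using Nat.strong_induction_on generalizing t with
  | _ n ih =>
  by_cases hL : TA θ t ∩ B = ∅
  · exact ⟨t, 1, hL, one_mem _, (mul_one t).symm⟩
  -- otherwise peel off a terminal letter in `B` and factor the shorter prefix
  obtain ⟨x, ⟨u, rfl⟩, hxB⟩ := Set.nonempty_iff_ne_empty.2 hL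
  obtain ⟨l, m, hl, hm, rfl⟩ :=
    ih _ (by rw [← hn, toAdd_traceLength_mul_phi_of]; exact Nat.lt_succ_self _) u rfl
  exact ⟨l, m * phi θ (FreeMonoid.of x), hl,
    mul_mem hm (Submonoid.subset_closure ⟨x, hxB, rfl⟩), mul_assoc l m _⟩

/-- Lazard bisection, existence: every trace factors as `l·m`
with `l ∈ L` and `m ∈ M(B,θ_B)`. -/
theorem lazard_bisection_exists {α : Type} [Fintype α] (θ : α → α → Prop)
    (hrefl : ∀ x, θ x x) (hsymm : ∀ x y, θ x y → θ y x) (B : Set α)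
    (t : TraceMonoid θ) :
    ∃ l m : TraceMonoid θ, l ∈ leftFactor θ B ∧ m ∈ subTrace θ B ∧ t = l * m :=
  lazard_bisection_exists_general θ B t
end

section
/- In the Lazard bisection M(Σ,θ) = L · M(B,θ_B), the decomposition is unique: if l·m = l'·m' with l,l' ∈ L and m,m' ∈ M(B,θ_B), then l = l' and m = m'. -/
/-!
Peel the letters of `m'` off from the right. If `l * m = t * b` with `b ∈ B`, then `b` is a
terminal letter of `l` or of `m`, since the terminal alphabet of a product lies in the union of
the terminal alphabets of the factors; as `l ∈ L`, this forces `m = m₀ * b`, and cancelling `b`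
on the right reduces to a shorter `m'`. Once `m'` is used up, `l * m = l'` with `l' ∈ L` forces
`m = 1`.

Both tools come from invariants of the trace congruence: deleting the last occurrence of a letter
gives right cancellation, and restricting to a pair of non-commuting letters shows that the letters
after the last occurrence of a terminal letter commute with it.
-/

open FreeMonoid

namespace FreeMonoid

variable {α : Type}

def restrict (p : α → Prop) [DecidablePred p] : FreeMonoid α →* FreeMonoid α :=
  lift fun c => if p c then of c else 1

@[simp] theorem restrict_of (p : α → Prop) [DecidablePred p] (c : α) :
    restrict p (of c) = if p c then of c else 1 := rfl

theorem mem_restrict {p : α → Prop} [DecidablePred p] {d : α} {w : FreeMonoid α} :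
    d ∈ restrict p w ↔ d ∈ w ∧ p d := by
  induction w using FreeMonoid.inductionOn with
  | one => simp [notMem_one]
  | of c => by_cases hc : p c <;> simp [hc, notMem_one] <;> rintro rfl <;> exact hc
  | mul u v hu hv => simp only [map_mul, mem_mul, hu, hv, or_and_right]

def eraseLast [DecidableEq α] (x : α) (w : FreeMonoid α) : FreeMonoid α :=
  ofList ((toList w).reverse.erase x).reverse

theorem eraseLast_mul_of_mem [DecidableEq α] {x : α} {v : FreeMonoid α} (u : FreeMonoid α)
    (h : x ∈ v) : eraseLast x (u * v) = u * eraseLast x v := by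
  have hv : x ∈ (toList v).reverse := List.mem_reverse.2 h
  simp only [eraseLast, toList_mul, List.reverse_append, List.erase_append_left _ hv,
    List.reverse_reverse, ofList_append, ofList_toList]

theorem eraseLast_mul_of_notMem [DecidableEq α] {x : α} {v : FreeMonoid α} (u : FreeMonoid α)
    (h : x ∉ v) : eraseLast x (u * v) = eraseLast x u * v := by
  have hv : x ∉ (toList v).reverse := mt List.mem_reverse.1 h
  simp only [eraseLast, toList_mul, List.reverse_append, List.erase_append_right _ hv,
    List.reverse_reverse, ofList_append, ofList_toList]

@[simp] theorem eraseLast_of [DecidableEq α] (x y : α) :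
    eraseLast x (of y) = if y = x then 1 else of y := by
  by_cases h : y = x <;> simp [eraseLast, h]

theorem eraseLast_mul_of_self [DecidableEq α] (x : α) (u : FreeMonoid α) :
    eraseLast x (u * of x) = u := by
  simp [eraseLast_mul_of_mem u (mem_of_self (m := x))]

theorem exists_eq_mul_of_mul_of_notMem {x : α} {w : FreeMonoid α} (h : x ∈ w) :
    ∃ p s, w = p * of x * s ∧ x ∉ s := by
  induction w using FreeMonoid.inductionOn' with
  | one => exact absurd h notMem_one
  | of_mul c w ih =>
    by_cases hw : x ∈ w
    · obtain ⟨p, s, rfl, hs⟩ := ih hw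
      exact ⟨of c * p, s, by simp only [mul_assoc], hs⟩
    · obtain rfl : x = c := mem_of.1 ((mem_mul.1 h).resolve_right hw)
      exact ⟨1, w, by rw [one_mul], hw⟩

theorem exists_eq_mul_of_of_ne_one {w : FreeMonoid α} (h : w ≠ 1) : ∃ p d, w = p * of d :=
  (List.eq_nil_or_concat' (toList w)).resolve_left h

theorem eq_of_mul_of_eq_mul_of {u v : FreeMonoid α} {a b : α} (h : u * of a = v * of b) :
    a = b :=
  List.singleton_inj.1 (List.append_inj_right' h rfl)

end FreeMonoid

namespace TraceMonoid

variable {α : Type} {θ : α → α → Prop}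

theorem phi_surjective : Function.Surjective (phi θ) := Con.mk'_surjective

theorem phi_eq_phi_iff {u v : FreeMonoid α} : phi θ u = phi θ v ↔ traceCon θ u v := Con.eq _

theorem commute_phi_of_of {a b : α} (h : θ a b ∨ θ b a) :
    Commute (phi θ (of a)) (phi θ (of b)) := by
  rcases h with h | h
  · exact phi_eq_phi_iff.2 (ConGen.Rel.of _ _ ⟨a, b, h, rfl, rfl⟩)
  · exact (phi_eq_phi_iff.2 (ConGen.Rel.of _ _ ⟨b, a, h, rfl, rfl⟩)).symm

theorem commute_phi_of_phi {x : α} {s : FreeMonoid α} (h : ∀ c ∈ s, θ c x ∨ θ x c) :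
    Commute (phi θ (of x)) (phi θ s) := by
  induction s using FreeMonoid.inductionOn' with
  | one => simp
  | of_mul c s ih =>
    rw [map_mul]
    exact (commute_phi_of_of (h c (mem_mul.2 (.inl mem_of_self))).symm).mul_right
      (ih fun d hd => h d (mem_mul.2 (.inr hd)))

theorem phi_mul_of_mul {p s : FreeMonoid α} {x : α} (h : ∀ c ∈ s, θ c x ∨ θ x c) :
    phi θ (p * of x * s) = phi θ (p * s) * phi θ (of x) := by
  simp only [map_mul, mul_assoc, (commute_phi_of_phi h).eq]

theorem traceCon_le_ker {M : Type*} [Monoid M] (f : FreeMonoid α →* M)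
    (hf : ∀ a b, θ a b → Commute (f (of a)) (f (of b))) : traceCon θ ≤ Con.ker f :=
  Con.conGen_le.2 fun _ _ ⟨a, b, hab, hu, hv⟩ => by
    simpa [hu, hv, Con.ker_rel] using (hf a b hab).eq

theorem restrict_eq_of_traceCon {p : α → Prop} [DecidablePred p]
    (hp : ∀ a b, p a → p b → θ a b → a = b) {u v : FreeMonoid α} (h : traceCon θ u v) :
    restrict p u = restrict p v := by
  refine traceCon_le_ker (restrict p) (fun a b hab => ?_) h
  by_cases ha : p a
  · by_cases hb : p b
    · rw [hp a b ha hb hab]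
    · simp [hb]
  · simp [ha]

theorem mem_iff_of_traceCon {u v : FreeMonoid α} (h : traceCon θ u v) (x : α) :
    x ∈ u ↔ x ∈ v := by
  classical
  have := restrict_eq_of_traceCon (p := (· = x)) (fun a b ha hb _ => ha.trans hb.symm) h
  simpa [mem_restrict] using congrArg (x ∈ ·) this

theorem mem_iff_of_phi_eq {u v : FreeMonoid α} (h : phi θ u = phi θ v) (x : α) :
    x ∈ u ↔ x ∈ v :=
  mem_iff_of_traceCon (phi_eq_phi_iff.1 h) x

theorem traceCon_eraseLast [DecidableEq α] (x : α) {u v : FreeMonoid α} (h : traceCon θ u v) :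
    traceCon θ (eraseLast x u) (eraseLast x v) := by
  induction h with
  | of _ _ h =>
    obtain ⟨a, b, hab, rfl, rfl⟩ := h
    by_cases ha : a = x <;> by_cases hb : b = x <;> simp [eraseLast, ha, hb, Con.refl]
    exact ConGen.Rel.of _ _ ⟨a, b, hab, rfl, rfl⟩
  | refl => exact (traceCon θ).refl _
  | symm _ ih => exact (traceCon θ).symm ih
  | trans _ _ ih₁ ih₂ => exact (traceCon θ).trans ih₁ ih₂
  | @mul u₁ v₁ u₂ v₂ h₁ h₂ ih₁ ih₂ =>
    by_cases hx : x ∈ u₂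
    · have hx' : x ∈ v₂ := (mem_iff_of_traceCon h₂ x).1 hx
      rw [eraseLast_mul_of_mem _ hx, eraseLast_mul_of_mem _ hx']
      exact (traceCon θ).mul h₁ ih₂
    · have hx' : x ∉ v₂ := mt (mem_iff_of_traceCon h₂ x).2 hx
      rw [eraseLast_mul_of_notMem _ hx, eraseLast_mul_of_notMem _ hx']
      exact (traceCon θ).mul ih₁ h₂

instance : IsRightCancelMul (TraceMonoid θ) where
  mul_right_cancel r s t h := by
    classical
    change s * r = t * r at h
    obtain ⟨w, rfl⟩ := phi_surjective r
    induction w using FreeMonoid.inductionOn generalizing s t with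
    | one => simpa using h
    | of x =>
      obtain ⟨u, rfl⟩ := phi_surjective s
      obtain ⟨v, rfl⟩ := phi_surjective t
      have huv : phi θ (u * of x) = phi θ (v * of x) := by simpa only [map_mul] using h
      have := traceCon_eraseLast x (phi_eq_phi_iff.1 huv)
      rwa [eraseLast_mul_of_self, eraseLast_mul_of_self, ← phi_eq_phi_iff] at this
    | mul w₁ w₂ ih₁ ih₂ =>
      exact ih₁ _ _ (ih₂ _ _ (by simpa only [map_mul, mul_assoc] using h))

/-- Otherwise the restriction to `{x, c}` of the left side ends in `c`, that of the right side
in `x`. -/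
theorem rel_or_rel_of_mem_of_phi_eq_mul_of {p s : FreeMonoid α} {x c : α} {t : TraceMonoid θ}
    (h : phi θ (p * of x * s) = t * phi θ (of x)) (hx : x ∉ s) (hc : c ∈ s) :
    θ c x ∨ θ x c := by
  classical
  by_contra hdep
  obtain ⟨t, rfl⟩ := phi_surjective t
  have hpair : ∀ a b, (a = x ∨ a = c) → (b = x ∨ b = c) → θ a b → a = b := by
    rintro a b (rfl | rfl) (rfl | rfl) hab <;> tauto
  have key := restrict_eq_of_traceCon hpair (phi_eq_phi_iff.1 (h.trans (map_mul _ _ _).symm))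
  have hs : restrict (fun d => d = x ∨ d = c) s ≠ 1 := fun h1 =>
    notMem_one (h1 ▸ mem_restrict.2 ⟨hc, Or.inr rfl⟩)
  obtain ⟨r, d, hrd⟩ := exists_eq_mul_of_of_ne_one hs
  have hdx : d = x := by
    refine eq_of_mul_of_eq_mul_of (u := restrict (fun d => d = x ∨ d = c) p * of x * r)
      (v := restrict (fun d => d = x ∨ d = c) t) ?_
    simpa only [map_mul, restrict_of, hrd, true_or, if_true, mul_assoc] using key
  have hd : d ∈ restrict (fun d => d = x ∨ d = c) s := hrd ▸ mem_mul.2 (.inr mem_of_self)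
  exact hx (hdx ▸ (mem_restrict.1 hd).1)

theorem TA_mul_subset (s t : TraceMonoid θ) : TA θ (s * t) ⊆ TA θ s ∪ TA θ t := by
  rintro x ⟨r, hr⟩
  obtain ⟨u, rfl⟩ := phi_surjective s
  obtain ⟨w, rfl⟩ := phi_surjective t
  rw [← map_mul] at hr
  by_cases hxw : x ∈ w
  · obtain ⟨p, q, rfl, hxq⟩ := exists_eq_mul_of_mul_of_notMem hxw
    refine .inr ⟨phi θ (p * q), phi_mul_of_mul fun c hc => ?_⟩
    exact rel_or_rel_of_mem_of_phi_eq_mul_of (by rwa [← mul_assoc, ← mul_assoc] at hr) hxq hc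
  · have hxu : x ∈ u := by
      obtain ⟨v, rfl⟩ := phi_surjective r
      rw [← map_mul] at hr
      have hxuw : x ∈ u * w := (mem_iff_of_phi_eq hr x).2 (mem_mul.2 (.inr mem_of_self))
      exact (mem_mul.1 hxuw).resolve_right hxw
    obtain ⟨p, q, rfl, hxq⟩ := exists_eq_mul_of_mul_of_notMem hxu
    refine .inl ⟨phi θ (p * q), phi_mul_of_mul fun c hc => ?_⟩
    exact rel_or_rel_of_mem_of_phi_eq_mul_of (s := q * w) (by rwa [mul_assoc] at hr)
      (fun h => (mem_mul.1 h).elim hxq hxw) (mem_mul.2 (.inl hc))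

variable {B : Set α}

theorem phi_mem_subTrace_iff {w : FreeMonoid α} :
    phi θ w ∈ subTrace θ B ↔ ∀ c ∈ w, c ∈ B := by
  refine ⟨fun h => ?_, fun h => ?_⟩
  · suffices ∀ t ∈ subTrace θ B, ∀ w, phi θ w = t → ∀ c ∈ w, c ∈ B from
      this _ h w rfl
    intro t ht
    induction ht using Submonoid.closure_induction with
    | mem t ht =>
      obtain ⟨b, hb, rfl⟩ := ht
      intro w hw c hc
      rw [mem_iff_of_phi_eq hw, mem_of] at hc
      exact hc ▸ hb
    | one =>
      intro w hw c hc
      exact absurd ((mem_iff_of_phi_eq (hw.trans (map_one _).symm) c).1 hc) notMem_one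
    | mul s t _ _ ihs iht =>
      intro w hw c hc
      obtain ⟨u, rfl⟩ := phi_surjective s
      obtain ⟨v, rfl⟩ := phi_surjective t
      rcases mem_mul.1 ((mem_iff_of_phi_eq (hw.trans (map_mul _ _ _).symm) c).1 hc) with hu | hv
      exacts [ihs u rfl c hu, iht v rfl c hv]
  · induction w using FreeMonoid.inductionOn' with
    | one => exact (subTrace θ B).one_mem
    | of_mul c w ih =>
      rw [map_mul]
      exact mul_mem (Submonoid.subset_closure ⟨c, h c (mem_mul.2 (.inl mem_of_self)), rfl⟩)
        (ih fun d hd => h d (mem_mul.2 (.inr hd)))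

theorem mem_subTrace_of_mul_mem {s t : TraceMonoid θ} (h : s * t ∈ subTrace θ B) :
    s ∈ subTrace θ B := by
  obtain ⟨u, rfl⟩ := phi_surjective s
  obtain ⟨v, rfl⟩ := phi_surjective t
  rw [← map_mul, phi_mem_subTrace_iff] at h
  exact phi_mem_subTrace_iff.2 fun c hc => h c (mem_mul.2 (.inl hc))

theorem notMem_TA_of_mem_leftFactor {l : TraceMonoid θ} (hl : l ∈ leftFactor θ B) {b : α}
    (hb : b ∈ B) : b ∉ TA θ l :=
  fun h => Set.eq_empty_iff_forall_notMem.1 hl b ⟨h, hb⟩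

theorem eq_one_of_mul_mem_leftFactor {l m : TraceMonoid θ} (hm : m ∈ subTrace θ B)
    (h : l * m ∈ leftFactor θ B) : m = 1 := by
  induction hm using Submonoid.closure_induction_right with
  | one => rfl
  | mul_right m _ _ hb _ =>
    obtain ⟨b, hb, rfl⟩ := hb
    exact absurd ⟨l * m, (mul_assoc _ _ _).symm⟩ (notMem_TA_of_mem_leftFactor h hb)

end TraceMonoid

open TraceMonoid in
theorem lazard_bisection_unique_general {α : Type} (θ : α → α → Prop)
    (B : Set α)
    (l l' m m' : TraceMonoid θ)
    (hl : l ∈ leftFactor θ B) (hl' : l' ∈ leftFactor θ B)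
    (hm : m ∈ subTrace θ B) (hm' : m' ∈ subTrace θ B)
    (h : l * m = l' * m') : l = l' ∧ m = m' := by
  induction hm' using Submonoid.closure_induction_right generalizing m with
  | one =>
    rw [mul_one] at h
    obtain rfl : m = 1 := eq_one_of_mul_mem_leftFactor hm (h ▸ hl')
    exact ⟨by simpa using h, rfl⟩
  | mul_right m'₀ _ _ hb ih =>
    obtain ⟨b, hb, rfl⟩ := hb
    have hbm : b ∈ TA θ (l * m) := h ▸ ⟨l' * m'₀, (mul_assoc _ _ _).symm⟩
    obtain ⟨m₀, rfl⟩ : b ∈ TA θ m :=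
      (TA_mul_subset l m hbm).resolve_left (notMem_TA_of_mem_leftFactor hl hb)
    have h₀ : l * m₀ = l' * m'₀ := mul_right_cancel (by simpa only [mul_assoc] using h)
    obtain ⟨rfl, rfl⟩ := ih m₀ (mem_subTrace_of_mul_mem hm) h₀
    exact ⟨rfl, rfl⟩

/-- Lazard bisection, uniqueness of the decomposition. -/
theorem lazard_bisection_unique {α : Type} [Fintype α] (θ : α → α → Prop)
    (hrefl : ∀ x, θ x x) (hsymm : ∀ x y, θ x y → θ y x) (B : Set α)
    (l l' m m' : TraceMonoid θ)
    (hl : l ∈ leftFactor θ B) (hl' : l' ∈ leftFactor θ B)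
    (hm : m ∈ subTrace θ B) (hm' : m' ∈ subTrace θ B)
    (h : l * m = l' * m') : l = l' ∧ m = m' :=
  lazard_bisection_unique_general θ B l l' m m' hl hl' hm hm' h
end

section
/- For any trace t ∈ M(Σ,θ) and letter x ∈ Σ, the terminal alphabet of t·x equals (TA(t) ∪ {x}) ∩ Com(x), where Com(x) = {z ∈ Σ | (x,z) ∈ θ}. -/
/-- Word-level terminal-letter predicate. -/
def TAword {α : Type} (θ : α → α → Prop) (y : α) (l : List α) : Prop :=
  ∃ u v : List α, l = u ++ y :: v ∧ ∀ z ∈ v, θ y z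

lemma TAword_append {α : Type} (θ : α → α → Prop) (y : α) (l₁ l₂ : List α) :
    TAword θ y (l₁ ++ l₂) ↔ TAword θ y l₂ ∨ (TAword θ y l₁ ∧ ∀ z ∈ l₂, θ y z) := by
  constructor
  · rintro ⟨u, v, h, hc⟩
    rcases List.append_eq_append_iff.mp h with ⟨m, hu, hl2⟩ | ⟨m, hl1, hm⟩
    · exact Or.inl ⟨m, v, hl2, hc⟩
    · rcases m with _ | ⟨a, m⟩
      · simp at hl1 hm
        exact Or.inl ⟨[], v, by simp [hm], hc⟩
      · obtain ⟨rfl, hv⟩ := List.cons.injEq .. ▸ hm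
        subst hv
        exact Or.inr ⟨⟨u, m, hl1, fun z hz => hc z (by simp [hz])⟩,
          fun z hz => hc z (by simp [hz])⟩
  · rintro (⟨u, v, h, hc⟩ | ⟨⟨u, v, h, hc⟩, hall⟩)
    · exact ⟨l₁ ++ u, v, by simp [h], hc⟩
    · refine ⟨u, v ++ l₂, by simp [h], ?_⟩
      intro z hz
      rcases List.mem_append.mp hz with hz | hz
      · exact hc z hz
      · exact hall z hz

lemma TAword_singleton {α : Type} (θ : α → α → Prop) (y x : α) :
    TAword θ y [x] ↔ y = x := by
  constructor
  · rintro ⟨u, v, h, -⟩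
    rcases u with _ | ⟨a, u⟩
    · simp at h; exact h.1.symm
    · simp at h
  · rintro rfl
    exact ⟨[], [], rfl, by simp⟩

lemma TAword_pair {α : Type} (θ : α → α → Prop) (y p q : α) :
    TAword θ y [p, q] ↔ y = q ∨ (y = p ∧ θ p q) := by
  constructor
  · rintro ⟨u, v, h, hc⟩
    rcases u with _ | ⟨a, _ | ⟨b, u⟩⟩
    · simp at h
      obtain ⟨rfl, rfl⟩ := h
      exact Or.inr ⟨rfl, hc q (by simp)⟩
    · simp at h
      exact Or.inl h.2.1.symm
    · simp at h
  · rintro (rfl | ⟨rfl, hpq⟩)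
    · exact ⟨[p], [], rfl, by simp⟩
    · exact ⟨[], [q], rfl, by simpa⟩

lemma traceCon_perm {α : Type} {θ : α → α → Prop} {w w' : FreeMonoid α}
    (h : ConGen.Rel (traceRel θ) w w') :
    List.Perm (FreeMonoid.toList w) (FreeMonoid.toList w') := by
  induction h with
  | of a b hab =>
      obtain ⟨p, q, _, rfl, rfl⟩ := hab
      exact List.Perm.swap q p []
  | refl _ => exact List.Perm.refl _
  | symm _ ih => exact ih.symm
  | trans _ _ ih1 ih2 => exact ih1.trans ih2
  | mul _ _ ih1 ih2 => simpa [FreeMonoid.toList_mul] using ih1.append ih2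

lemma TAword_invariant {α : Type} {θ : α → α → Prop}
    (hsymm : ∀ a b, θ a b → θ b a) (y : α) {w w' : FreeMonoid α}
    (h : ConGen.Rel (traceRel θ) w w') :
    TAword θ y (FreeMonoid.toList w) ↔ TAword θ y (FreeMonoid.toList w') := by
  induction h with
  | of a b hab =>
      obtain ⟨p, q, hpq, rfl, rfl⟩ := hab
      show TAword θ y [p, q] ↔ TAword θ y [q, p]
      rw [TAword_pair, TAword_pair]
      have hqp := hsymm p q hpq
      tauto
  | refl _ => exact Iff.rfl
  | symm _ ih => exact ih.symm
  | trans _ _ ih1 ih2 => exact ih1.trans ih2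
  | mul h1 h2 ih1 ih2 =>
      rw [FreeMonoid.toList_mul, FreeMonoid.toList_mul, TAword_append, TAword_append,
        ih1, ih2]
      constructor
      · rintro (h | ⟨h, hall⟩)
        · exact Or.inl h
        · exact Or.inr ⟨h, fun z hz => hall z ((traceCon_perm h2).mem_iff.mpr hz)⟩
      · rintro (h | ⟨h, hall⟩)
        · exact Or.inl h
        · exact Or.inr ⟨h, fun z hz => hall z ((traceCon_perm h2).mem_iff.mp hz)⟩

lemma rel_move {α : Type} {θ : α → α → Prop} (y : α) :
    ∀ l : List α, (∀ z ∈ l, θ y z) →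
      ConGen.Rel (traceRel θ) (FreeMonoid.of y * FreeMonoid.ofList l)
        (FreeMonoid.ofList l * FreeMonoid.of y)
  | [], _ => by
      simpa using ConGen.Rel.refl (FreeMonoid.of y)
  | z :: l, h => by
      have h1 : ConGen.Rel (traceRel θ) (FreeMonoid.of y * FreeMonoid.of z)
          (FreeMonoid.of z * FreeMonoid.of y) :=
        ConGen.Rel.of _ _ ⟨y, z, h z (by simp), rfl, rfl⟩
      have h2 := rel_move y l (fun w hw => h w (by simp [hw]))
      have e : FreeMonoid.ofList (z :: l) = FreeMonoid.of z * FreeMonoid.ofList l := rfl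
      rw [e, ← mul_assoc, mul_assoc (FreeMonoid.of z)]
      exact (ConGen.Rel.mul h1 (ConGen.Rel.refl _)).trans
        (by rw [mul_assoc]; exact ConGen.Rel.mul (ConGen.Rel.refl _) h2)

lemma mem_TA_iff {α : Type} {θ : α → α → Prop}
    (hsymm : ∀ a b, θ a b → θ b a) (y : α) (w : FreeMonoid α) :
    y ∈ TA θ (phi θ w) ↔ TAword θ y (FreeMonoid.toList w) := by
  constructor
  · rintro ⟨u, hu⟩
    obtain ⟨u', rfl⟩ := Con.mk'_surjective (c := traceCon θ) u
    rw [show ((traceCon θ).mk' u' : TraceMonoid θ) = phi θ u' from rfl, ← map_mul] at hu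
    have h : ConGen.Rel (traceRel θ) w (u' * FreeMonoid.of y) := (Con.eq _).mp hu
    rw [TAword_invariant hsymm y h, FreeMonoid.toList_mul]
    exact ⟨FreeMonoid.toList u', [], by simp, by simp⟩
  · rintro ⟨u, v, h, hc⟩
    refine ⟨phi θ (FreeMonoid.ofList u * FreeMonoid.ofList v), ?_⟩
    have hw : w = FreeMonoid.ofList u * FreeMonoid.of y * FreeMonoid.ofList v := by
      apply FreeMonoid.toList.injective
      simp [h]
    have hr := rel_move y v hc
    have hcomm : phi θ (FreeMonoid.of y) * phi θ (FreeMonoid.ofList v)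
        = phi θ (FreeMonoid.ofList v) * phi θ (FreeMonoid.of y) := by
      rw [← map_mul, ← map_mul]
      exact (Con.eq _).mpr hr
    rw [hw, map_mul, map_mul, map_mul, mul_assoc, hcomm, ← mul_assoc]

/-- `TA(t·x) = (TA(t) ∪ {x}) ∩ Com(x)`. -/
theorem TA_mul_letter {α : Type} (θ : α → α → Prop)
    (hrefl : ∀ x, θ x x) (hsymm : ∀ x y, θ x y → θ y x)
    (t : TraceMonoid θ) (x : α) :
    TA θ (t * phi θ (FreeMonoid.of x)) = (TA θ t ∪ {x}) ∩ {z | θ x z} := by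
  have hsurj : Function.Surjective (phi θ) := Con.mk'_surjective
  obtain ⟨w, rfl⟩ := hsurj t
  ext y
  simp only [Set.mem_inter_iff, Set.mem_union, Set.mem_singleton_iff, Set.mem_setOf_eq]
  rw [← map_mul, mem_TA_iff hsymm, mem_TA_iff hsymm, FreeMonoid.toList_mul,
    FreeMonoid.toList_of, TAword_append, TAword_singleton]
  simp only [List.mem_singleton, forall_eq]
  constructor
  · rintro (rfl | ⟨h, hyx⟩)
    · exact ⟨Or.inr rfl, hrefl y⟩
    · exact ⟨Or.inl h, hsymm y x hyx⟩
  · rintro ⟨h | rfl, hxy⟩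
    · exact Or.inr ⟨h, hsymm x y hxy⟩
    · exact Or.inl rfl
end

section
/- For each letter b ∈ Σ, the language TN_b = {w ∈ Σ* | b ∉ TA(φ(w))} is recognized by the two-state deterministic automaton with states {1,2}, initial and accepting state 1, transitions: from state 1, reading b goes to state 2 and reading any other letter stays at 1; from state 2, reading a letter in Com(b) stays at 2 and reading a letter not in Com(b) goes to 1. In particular, TN_b is a regular language. -/
section Aux

variable {α : Type} [DecidableEq α] (θ : α → α → Prop) [DecidableRel θ]

/-- The transition function of the two-state DFA. -/
def dstep (b : α) : Bool → α → Bool :=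
  fun s x => if s then (if θ b x then true else false)
             else (if x = b then true else false)

set_option maxRecDepth 4000 in
lemma dstep_swap (b : α) (hrefl : ∀ x, θ x x) (hsymm : ∀ x y, θ x y → θ y x)
    {a c : α} (h : θ a c) (s : Bool) :
    dstep θ b (dstep θ b s a) c = dstep θ b (dstep θ b s c) a := by
  cases s <;> simp only [dstep, Bool.false_eq_true, if_false, if_true] <;>
    split_ifs <;>
    first
    | rfl
    | exact (by assumption : False).elim
    | exact absurd rfl (by assumption)
    | (subst_vars; exact absurd h (by assumption))
    | (subst_vars; exact absurd (hsymm _ _ h) (by assumption))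
    | (subst_vars; exact absurd (hrefl _) (by assumption))

lemma foldl_congr (b : α) (hrefl : ∀ x, θ x x) (hsymm : ∀ x y, θ x y → θ y x)
    {u v : FreeMonoid α} (h : ConGen.Rel (traceRel θ) u v) (s : Bool) :
    List.foldl (dstep θ b) s (FreeMonoid.toList u) =
      List.foldl (dstep θ b) s (FreeMonoid.toList v) := by
  induction h generalizing s with
  | of u v huv =>
      obtain ⟨a, c, hac, rfl, rfl⟩ := huv
      simp [FreeMonoid.toList_mul, FreeMonoid.toList_of]
      exact dstep_swap θ b hrefl hsymm hac s
  | refl => rfl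
  | symm _ ih => exact (ih s).symm
  | trans _ _ ih1 ih2 => exact (ih1 s).trans (ih2 s)
  | mul _ _ ih1 ih2 =>
      simp only [FreeMonoid.toList_mul, List.foldl_append]
      rw [ih1 s]; exact ih2 _

lemma phi_comm (b : α) {x : α} (h : θ b x) :
    phi θ (FreeMonoid.of b) * phi θ (FreeMonoid.of x)
      = phi θ (FreeMonoid.of x) * phi θ (FreeMonoid.of b) := by
  rw [← map_mul, ← map_mul]
  exact Con.eq _ |>.mpr (ConGen.Rel.of _ _ ⟨b, x, h, rfl, rfl⟩)

lemma mem_TA_iff_s6 (b : α) (hrefl : ∀ x, θ x x) (hsymm : ∀ x y, θ x y → θ y x)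
    (w : List α) :
    b ∈ TA θ (phi θ (FreeMonoid.ofList w)) ↔
      List.foldl (dstep θ b) false w = true := by
  constructor
  · rintro ⟨u, hu⟩
    obtain ⟨u', rfl⟩ := Con.mk'_surjective u
    have : traceCon θ (FreeMonoid.ofList w) (u' * FreeMonoid.of b) := by
      rw [← Con.eq]
      simpa [phi, map_mul] using hu
    have h2 := foldl_congr θ b hrefl hsymm this false
    have hw : FreeMonoid.toList (FreeMonoid.ofList w) = w := rfl
    rw [hw] at h2
    rw [h2]
    simp [FreeMonoid.toList_mul, FreeMonoid.toList_of, dstep]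
    cases List.foldl (dstep θ b) false (FreeMonoid.toList u') <;>
      simp [dstep, hrefl]
  · intro h
    induction w using List.reverseRecOn with
    | nil => simp at h
    | append_singleton w x ih =>
        rw [List.foldl_append] at h
        simp only [List.foldl_cons, List.foldl_nil] at h
        have hsplit : phi θ (FreeMonoid.ofList (w ++ [x]))
            = phi θ (FreeMonoid.ofList w) * phi θ (FreeMonoid.of x) := by
          rw [← map_mul]; rfl
        rcases hs : List.foldl (dstep θ b) false w with _ | _
        · rw [hs] at h
          simp [dstep] at h
          subst h
          exact ⟨_, hsplit⟩
        · rw [hs] at h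
          simp [dstep] at h
          obtain ⟨u, hu⟩ := ih hs
          refine ⟨u * phi θ (FreeMonoid.of x), ?_⟩
          rw [hsplit, hu, mul_assoc, mul_assoc, ← phi_comm θ b h]

end Aux

/-- the two-state DFA (states `Bool`, with `false` = state 1,
`true` = state 2; start and accept state `false`; from `false` reading `b` goes to
`true`, other letters stay; from `true`, letters of `Com(b)` stay, others go back
to `false`) recognizes `TN_b = {w | b ∉ TA(φ(w))}`; in particular `TN_b` is
regular. -/
theorem TN_b_recognized {α : Type} [Fintype α] [DecidableEq α] (θ : α → α → Prop)
    [DecidableRel θ] (hrefl : ∀ x, θ x x) (hsymm : ∀ x y, θ x y → θ y x) (b : α) :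
    (DFA.accepts
        ⟨fun s x => if s then (if θ b x then true else false)
                    else (if x = b then true else false),
         false, {false}⟩ : Language α)
      = {w : List α | b ∉ TA θ (phi θ (FreeMonoid.ofList w))} ∧
    Language.IsRegular {w : List α | b ∉ TA θ (phi θ (FreeMonoid.ofList w))} := by
  have heq : (DFA.accepts
        ⟨fun s x => if s then (if θ b x then true else false)
                    else (if x = b then true else false),
         false, {false}⟩ : Language α)
      = {w : List α | b ∉ TA θ (phi θ (FreeMonoid.ofList w))} := by
    ext w
    rw [DFA.mem_accepts]
    show List.foldl (dstep θ b) false w ∈ ({false} : Set Bool) ↔ _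
    simp only [Set.mem_singleton_iff, Set.mem_setOf_eq]
    rw [Bool.eq_false_iff]
    exact not_congr (mem_TA_iff_s6 θ b hrefl hsymm w).symm
  exact ⟨heq, Bool, inferInstance, _, heq⟩
end

section
/- The language Rep(L) ⊆ Σ* of representative words of the left Lazard factor L is regular (recognizable by a finite-state automaton). -/
def tstep {α : Type} (θ : α → α → Prop) (S : Set α) (a : α) : Set α :=
  {a} ∪ {x ∈ S | θ x a}

lemma tstep_comm {α : Type} {θ : α → α → Prop} (hsymm : ∀ x y, θ x y → θ y x)
    {a b : α} (hab : θ a b) (S : Set α) :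
    tstep θ (tstep θ S a) b = tstep θ (tstep θ S b) a := by
  have hba := hsymm _ _ hab
  ext x
  simp only [tstep, Set.mem_union, Set.mem_singleton_iff, Set.mem_setOf_eq]
  constructor
  · rintro (rfl | ⟨(rfl | ⟨hxS, hxa⟩), hxb⟩)
    · exact Or.inr ⟨Or.inl rfl, hba⟩
    · exact Or.inl rfl
    · exact Or.inr ⟨Or.inr ⟨hxS, hxb⟩, hxa⟩
  · rintro (rfl | ⟨(rfl | ⟨hxS, hxb⟩), hxa⟩)
    · exact Or.inr ⟨Or.inl rfl, hab⟩
    · exact Or.inl rfl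
    · exact Or.inr ⟨Or.inr ⟨hxS, hxa⟩, hxb⟩

lemma foldl_invariant {α : Type} {θ : α → α → Prop} (hsymm : ∀ x y, θ x y → θ y x)
    {u v : FreeMonoid α} (h : traceCon θ u v) (S : Set α) :
    u.toList.foldl (tstep θ) S = v.toList.foldl (tstep θ) S := by
  induction h generalizing S with
  | of u v h =>
      obtain ⟨a, b, hab, rfl, rfl⟩ := h
      simp only [FreeMonoid.toList_mul, FreeMonoid.toList_of, List.singleton_append,
        List.foldl_cons, List.foldl_nil]
      exact tstep_comm hsymm hab S
  | refl _ => rfl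
  | symm _ ih => exact (ih S).symm
  | trans _ _ ih1 ih2 => exact (ih1 S).trans (ih2 S)
  | mul _ _ ih1 ih2 =>
      simp only [FreeMonoid.toList_mul, List.foldl_append]
      rw [ih1 S]; exact ih2 _

lemma TA_eq {α : Type} (θ : α → α → Prop) (hsymm : ∀ x y, θ x y → θ y x) (w : List α) :
    TA θ (phi θ (FreeMonoid.ofList w)) = w.foldl (tstep θ) ∅ := by
  apply Set.Subset.antisymm
  · rintro x ⟨u, hu⟩
    obtain ⟨v, rfl⟩ := Con.mk'_surjective u
    have : traceCon θ (FreeMonoid.ofList w) (v * FreeMonoid.of x) := by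
      rw [← Con.eq]; exact hu
    have h := foldl_invariant hsymm this (∅ : Set α)
    have hw : (FreeMonoid.ofList w).toList = w := rfl
    rw [hw] at h
    rw [h]
    simp only [FreeMonoid.toList_mul, FreeMonoid.toList_of, List.foldl_append,
      List.foldl_cons, List.foldl_nil]
    exact Or.inl rfl
  · induction w using List.reverseRecOn with
    | nil => simp
    | append_singleton w a ih =>
        intro x hx
        rw [List.foldl_append, List.foldl_cons, List.foldl_nil] at hx
        rcases hx with hx | ⟨hxS, hxa⟩
        · rcases hx with rfl
          refine ⟨phi θ (FreeMonoid.ofList w), ?_⟩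
          rw [← map_mul]
          rfl
        · obtain ⟨u, hu⟩ := ih hxS
          refine ⟨u * phi θ (FreeMonoid.of a), ?_⟩
          have key : phi θ (FreeMonoid.of x * FreeMonoid.of a)
              = phi θ (FreeMonoid.of a * FreeMonoid.of x) := by
            exact (Con.eq (traceCon θ)).mpr (ConGen.Rel.of _ _ ⟨x, a, hxa, rfl, rfl⟩)
          have h1 : phi θ (FreeMonoid.ofList (w ++ [a]))
              = phi θ (FreeMonoid.ofList w) * phi θ (FreeMonoid.of a) := by
            rw [← map_mul]; rfl
          rw [h1, hu, mul_assoc, ← map_mul, key, map_mul, ← mul_assoc]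

/-- the language `Rep(L)` of representative words of the left Lazard
factor is regular. -/
theorem rep_leftFactor_regular {α : Type} [Fintype α] (θ : α → α → Prop)
    (hrefl : ∀ x, θ x x) (hsymm : ∀ x y, θ x y → θ y x) (B : Set α) :
    Language.IsRegular
      {w : List α | phi θ (FreeMonoid.ofList w) ∈ leftFactor θ B} := by
  haveI := Classical.decEq α
  refine ⟨Set α, inferInstance, ⟨tstep θ, ∅, {S | S ∩ B = ∅}⟩, ?_⟩
  ext w
  rw [DFA.mem_accepts]
  show (w.foldl (tstep θ) ∅ ∩ B = ∅) ↔ _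
  rw [← TA_eq θ hsymm w]
  rfl
end

section
/- Consider the deterministic automaton A_B whose states are the subsets of B, with initial and unique final state ∅, and transition from state B' on letter x to (B' ∪ {x}) ∩ Com(x) ∩ B. Then for every word w = a₁⋯aₙ ∈ Σ*, the state reached after reading w from ∅ equals TA(φ(w)) ∩ B, where φ(w) is the trace represented by w. -/
/-! A letter stays in the state `(S ∪ {x}) ∩ Com(x)` exactly as long as every letter read after
it commutes with it, i.e. as long as it could be moved to the end of the trace. Since this
transition commutes for commuting letters, the state only depends on the trace `φ(w)`; reading a
trace of the form `u y` ends in a state containing `y`, which gives `TA(φ(w)) ⊆ state`, while the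
converse follows letter by letter. Intersecting with `B` commutes with each transition. -/

section TerminalAlphabet

variable {α : Type} (θ : α → α → Prop)

def comStep (S : Set α) (x : α) : Set α := (S ∪ {x}) ∩ {z | θ x z}

variable {θ}

lemma comStep_comm (hsymm : ∀ x y, θ x y → θ y x) {a b : α} (hab : θ a b) (S : Set α) :
    comStep θ (comStep θ S a) b = comStep θ (comStep θ S b) a := by
  have hba := hsymm a b hab
  ext z
  simp only [comStep, Set.mem_inter_iff, Set.mem_union, Set.mem_singleton_iff, Set.mem_ofPred_eq]
  constructor <;> rintro ⟨(⟨(hz | rfl), h₁⟩ | rfl), h₂⟩ <;> tauto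

lemma foldl_comStep_eq_of_traceCon (hsymm : ∀ x y, θ x y → θ y x) {u v : FreeMonoid α}
    (h : traceCon θ u v) (S : Set α) :
    u.toList.foldl (comStep θ) S = v.toList.foldl (comStep θ) S := by
  induction h generalizing S with
  | of _ _ hrel =>
    obtain ⟨a, b, hab, rfl, rfl⟩ := hrel
    exact comStep_comm hsymm hab S
  | refl => rfl
  | symm _ ih => exact (ih S).symm
  | trans _ _ ih₁ ih₂ => exact (ih₁ S).trans (ih₂ S)
  | mul _ _ ih₁ ih₂ => simp only [FreeMonoid.toList_mul, List.foldl_append, ih₁, ih₂]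

lemma phi_of_mul_of_comm {a b : α} (hab : θ a b) :
    phi θ (FreeMonoid.of a * FreeMonoid.of b) = phi θ (FreeMonoid.of b * FreeMonoid.of a) :=
  (Con.eq _).2 <| ConGen.Rel.of _ _ ⟨a, b, hab, rfl, rfl⟩

lemma TA_phi_subset_foldl_comStep (hrefl : ∀ x, θ x x) (hsymm : ∀ x y, θ x y → θ y x)
    (w : List α) : TA θ (phi θ (FreeMonoid.ofList w)) ⊆ w.foldl (comStep θ) ∅ := by
  rintro y ⟨u, hu⟩
  obtain ⟨u, rfl⟩ := Con.mk'_surjective u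
  have hcon : traceCon θ (FreeMonoid.ofList w) (u * FreeMonoid.of y) := (Con.eq _).1 hu
  have hfold := foldl_comStep_eq_of_traceCon hsymm hcon ∅
  rw [FreeMonoid.toList_ofList] at hfold
  rw [hfold, FreeMonoid.toList_mul, FreeMonoid.toList_of, List.foldl_append]
  exact ⟨Or.inr rfl, hrefl y⟩

lemma foldl_comStep_subset_TA_phi (hsymm : ∀ x y, θ x y → θ y x) (w : List α) :
    w.foldl (comStep θ) ∅ ⊆ TA θ (phi θ (FreeMonoid.ofList w)) := by
  induction w using List.reverseRecOn with
  | nil => simp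
  | append_singleton w x ih =>
    have hsplit : phi θ (FreeMonoid.ofList (w ++ [x]))
        = phi θ (FreeMonoid.ofList w) * phi θ (FreeMonoid.of x) := map_mul _ _ _
    rw [List.foldl_append, hsplit]
    rintro y ⟨hy | rfl, hxy⟩
    · obtain ⟨u, hu⟩ := ih hy
      refine ⟨u * phi θ (FreeMonoid.of x), ?_⟩
      rw [hu, mul_assoc, ← map_mul, phi_of_mul_of_comm (hsymm x y hxy), map_mul, mul_assoc]
    · exact ⟨_, rfl⟩

lemma TA_phi_ofList (hrefl : ∀ x, θ x x) (hsymm : ∀ x y, θ x y → θ y x) (w : List α) :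
    TA θ (phi θ (FreeMonoid.ofList w)) = w.foldl (comStep θ) ∅ :=
  (TA_phi_subset_foldl_comStep hrefl hsymm w).antisymm (foldl_comStep_subset_TA_phi hsymm w)

end TerminalAlphabet

theorem state_eq_TA_inter_general {α : Type} (θ : α → α → Prop)
    (hrefl : ∀ x, θ x x) (hsymm : ∀ x y, θ x y → θ y x) (B : Set α)
    (w : List α) :
    w.foldl (fun B' x => (B' ∪ {x}) ∩ {z | θ x z} ∩ B) (∅ : Set α)
      = TA θ (phi θ (FreeMonoid.ofList w)) ∩ B := by
  have hstep : ∀ (S : Set α) x, (S ∩ B ∪ {x}) ∩ {z | θ x z} ∩ B = comStep θ S x ∩ B := by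
    intro S x
    ext z
    simp only [comStep, Set.mem_inter_iff, Set.mem_union, Set.mem_singleton_iff, Set.mem_ofPred_eq]
    tauto
  have hfold := List.foldl_hom (· ∩ B) (g₁ := comStep θ)
    (g₂ := fun B' x => (B' ∪ {x}) ∩ {z | θ x z} ∩ B) (l := w) (init := ∅) hstep
  rwa [Set.empty_inter, ← TA_phi_ofList hrefl hsymm] at hfold

/-- in the automaton `A_B` (states: subsets of `B`, transition
`δ(B',x) = (B' ∪ {x}) ∩ Com(x) ∩ B`), the state reached from `∅` after reading
`w` is `TA(φ(w)) ∩ B`. -/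
theorem state_eq_TA_inter {α : Type} [Fintype α] (θ : α → α → Prop)
    (hrefl : ∀ x, θ x x) (hsymm : ∀ x y, θ x y → θ y x) (B : Set α)
    (w : List α) :
    w.foldl (fun B' x => (B' ∪ {x}) ∩ {z | θ x z} ∩ B) (∅ : Set α)
      = TA θ (phi θ (FreeMonoid.ofList w)) ∩ B :=
  state_eq_TA_inter_general θ hrefl hsymm B w
end

section
/- The complete deterministic automaton A_B (states: subsets of B; initial = final state ∅; transition δ(B',x) = (B' ∪ {x}) ∩ Com(x) ∩ B) recognizes exactly the language Rep(L) of words representing traces whose terminal alphabet avoids B. -/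
section Aux
variable {α : Type} (θ : α → α → Prop) (B : Set α)

/-- The transition function of the automaton. -/
def delta (S : Set α) (x : α) : Set α := (S ∪ {x}) ∩ {z | θ x z} ∩ B

lemma mem_delta {S : Set α} {x y : α} :
    y ∈ delta θ B S x ↔ (y ∈ S ∨ y = x) ∧ θ x y ∧ y ∈ B := by
  simp [delta, and_assoc]; tauto

lemma delta_swap (hrefl : ∀ x, θ x x) (hsymm : ∀ x y, θ x y → θ y x)
    {a b : α} (hab : θ a b) (S : Set α) :
    delta θ B (delta θ B S a) b = delta θ B (delta θ B S b) a := by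
  have haa := hrefl a
  have hbb := hrefl b
  have hba := hsymm _ _ hab
  ext x
  simp only [mem_delta]
  by_cases hxa : x = a <;> by_cases hxb : x = b <;> subst_vars <;> tauto

lemma foldl_congr_s9 (hrefl : ∀ x, θ x x) (hsymm : ∀ x y, θ x y → θ y x)
    {u v : FreeMonoid α} (h : traceCon θ u v) (S : Set α) :
    List.foldl (delta θ B) S u.toList = List.foldl (delta θ B) S v.toList := by
  induction h generalizing S with
  | of u v huv =>
    obtain ⟨a, b, hab, rfl, rfl⟩ := huv
    show List.foldl _ S [a, b] = List.foldl _ S [b, a]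
    simp [delta_swap θ B hrefl hsymm hab]
  | refl => rfl
  | symm _ ih => exact (ih S).symm
  | trans _ _ ih1 ih2 => exact (ih1 S).trans (ih2 S)
  | mul h1 h2 ih1 ih2 =>
    show List.foldl _ S (_ ++ _) = List.foldl _ S (_ ++ _)
    rw [List.foldl_append, List.foldl_append, ih1, ih2]

lemma comm_shift (x : α) (v : List α) (h : ∀ z ∈ v, θ x z) :
    traceCon θ (FreeMonoid.ofList (x :: v)) (FreeMonoid.ofList (v ++ [x])) := by
  induction v with
  | nil => exact (traceCon θ).refl _
  | cons z v ih =>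
    have step : traceCon θ (FreeMonoid.ofList [x, z]) (FreeMonoid.ofList [z, x]) :=
      ConGen.Rel.of _ _ ⟨x, z, h z (by simp), rfl, rfl⟩
    have h1 : traceCon θ (FreeMonoid.ofList (x :: z :: v)) (FreeMonoid.ofList (z :: x :: v)) := by
      have := (traceCon θ).mul step ((traceCon θ).refl (FreeMonoid.ofList v))
      exact this
    have h2 : traceCon θ (FreeMonoid.ofList (z :: x :: v)) (FreeMonoid.ofList (z :: (v ++ [x]))) := by
      have := (traceCon θ).mul ((traceCon θ).refl (FreeMonoid.ofList [z]))
        (ih (fun y hy => h y (by simp [hy])))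
      exact this
    exact (traceCon θ).trans h1 h2

lemma mem_foldl (hsymm : ∀ x y, θ x y → θ y x) (S : Set α) (w : List α) (x : α) (hx : x ∈ List.foldl (delta θ B) S w) :
    x ∈ S ∨ ∃ u v, w = u ++ x :: v ∧ (∀ z ∈ v, θ x z) ∧ x ∈ B := by
  induction w using List.reverseRecOn generalizing x with
  | nil => exact Or.inl hx
  | append_singleton w y ih =>
    rw [List.foldl_append] at hx
    simp only [List.foldl_cons, List.foldl_nil, mem_delta] at hx
    obtain ⟨h1, h2, h3⟩ := hx
    rcases h1 with h1 | rfl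
    · rcases ih x h1 with h | ⟨u, v, rfl, hv, hB⟩
      · exact Or.inl h
      · exact Or.inr ⟨u, v ++ [y], by simp, by
          intro z hz; rcases List.mem_append.mp hz with hz | hz
          · exact hv z hz
          · simp at hz; subst hz; exact hsymm _ _ h2, hB⟩
    · exact Or.inr ⟨w, [], by simp, by simp, h3⟩

lemma phi_eq_iff {u v : FreeMonoid α} : phi θ u = phi θ v ↔ traceCon θ u v :=
  Con.eq _

lemma state_eq (hrefl : ∀ x, θ x x) (hsymm : ∀ x y, θ x y → θ y x) (w : List α) :
    List.foldl (delta θ B) ∅ w = TA θ (phi θ (FreeMonoid.ofList w)) ∩ B := by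
  ext x
  constructor
  · intro hx
    rcases mem_foldl θ B hsymm ∅ w x hx with h | ⟨u, v, rfl, hv, hB⟩
    · exact absurd h (Set.notMem_empty x)
    · refine ⟨⟨phi θ (FreeMonoid.ofList (u ++ v)), ?_⟩, hB⟩
      have hc : traceCon θ (FreeMonoid.ofList (x :: v)) (FreeMonoid.ofList (v ++ [x])) :=
        comm_shift θ x v hv
      have heq : phi θ (FreeMonoid.ofList (x :: v)) = phi θ (FreeMonoid.ofList (v ++ [x])) :=
        (phi_eq_iff θ).mpr hc
      rw [show FreeMonoid.ofList (u ++ x :: v)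
            = FreeMonoid.ofList u * FreeMonoid.ofList (x :: v) from rfl,
        map_mul, heq,
        show FreeMonoid.ofList (v ++ [x]) = FreeMonoid.ofList v * FreeMonoid.of x from rfl,
        map_mul, ← mul_assoc, ← map_mul]
      rfl
  · rintro ⟨⟨t, ht⟩, hB⟩
    obtain ⟨u', rfl⟩ := Con.mk'_surjective (c := traceCon θ) t
    have heq : phi θ (FreeMonoid.ofList w) = phi θ (u' * FreeMonoid.of x) := by
      rw [ht, map_mul]; rfl
    have hc : traceCon θ (FreeMonoid.ofList w) (u' * FreeMonoid.of x) :=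
      (phi_eq_iff θ).mp heq
    have key := foldl_congr_s9 θ B hrefl hsymm hc (∅ : Set α)
    show x ∈ List.foldl (delta θ B) ∅ (FreeMonoid.toList (FreeMonoid.ofList w))
    rw [key, show (u' * FreeMonoid.of x).toList = u'.toList ++ [x] from rfl,
      List.foldl_append]
    simp only [List.foldl_cons, List.foldl_nil, mem_delta]
    exact ⟨Or.inr trivial, hrefl x, hB⟩

end Aux

/-- the complete deterministic automaton `A_B` (states: subsets of
`B`, i.e. sets of letters; start and unique accept state `∅`; transition
`δ(B',x) = (B' ∪ {x}) ∩ Com(x) ∩ B`) recognizes exactly `Rep(L)`. -/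
theorem A_B_recognizes_rep_leftFactor {α : Type} [Fintype α] (θ : α → α → Prop)
    (hrefl : ∀ x, θ x x) (hsymm : ∀ x y, θ x y → θ y x) (B : Set α) :
    (DFA.accepts
        ⟨fun B' x => (B' ∪ {x}) ∩ {z | θ x z} ∩ B, (∅ : Set α), {∅}⟩ : Language α)
      = {w : List α | phi θ (FreeMonoid.ofList w) ∈ leftFactor θ B} := by
  ext w
  rw [DFA.mem_accepts]
  show List.foldl (delta θ B) ∅ w ∈ ({∅} : Set (Set α)) ↔ _
  rw [Set.mem_singleton_iff, state_eq θ B hrefl hsymm w]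
  rfl
end

section
/- The language Rep(G(L)) of words representing traces in the minimal generating set G(L) of the left Lazard factor L is regular. -/
/-! Whether a trace `t` lies in `G(L)` depends only on `alph t`, `TA t` and on the pairs of such
data of `a` and `b` over all factorisations `t = a * b`. A factorisation of `φ w` is the same as
a colouring of the letters of `w` red or blue in which no blue letter precedes a red letter it
does not commute with, and the set of data of all colourings of `w` is computed by a morphism
from `Σ*` into a finite monoid of sets. So `Rep(G(L))` is recognised by a finite monoid. -/

open Pointwise

theorem Language.IsRegular.of_monoidHom {α M : Type*} [Monoid M] [Finite M] {L : Language α}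
    (f : FreeMonoid α →* M) (S : Set M) (hL : ∀ w, w ∈ L ↔ f (FreeMonoid.ofList w) ∈ S) :
    L.IsRegular := by
  have := Fintype.ofFinite M
  let D : DFA α M := ⟨fun m a => m * f (FreeMonoid.of a), 1, S⟩
  have hD : ∀ w m, D.evalFrom m w = m * f (FreeMonoid.ofList w) := by
    intro w
    induction w with
    | nil => intro m; simp [DFA.evalFrom_nil]
    | cons a w ih =>
      intro m
      rw [DFA.evalFrom_cons, ih, FreeMonoid.ofList_cons, map_mul, mul_assoc]
  refine Language.isRegular_iff.mpr ⟨M, inferInstance, D, ?_⟩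
  ext w
  change D.evalFrom 1 w ∈ S ↔ _
  rw [hD, one_mul, hL]

theorem Set.mul_comm_of_forall_commute {M : Type*} [Monoid M] {s t : Set M}
    (h : ∀ x ∈ s, ∀ y ∈ t, Commute x y) : s * t = t * s := by
  ext z
  constructor
  · rintro ⟨x, hx, y, hy, rfl⟩
    exact ⟨y, hy, x, hx, (h x hx y hy).symm.eq⟩
  · rintro ⟨y, hy, x, hx, rfl⟩
    exact ⟨x, hx, y, hy, (h x hx y hy).eq⟩

theorem FreeMonoid.apply_mem_of_forall_of_mem {α M : Type*} [Monoid M]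
    {f : FreeMonoid α →* M} {g : FreeMonoid α →* Set M}
    (h : ∀ a, f (FreeMonoid.of a) ∈ g (FreeMonoid.of a)) (w : FreeMonoid α) : f w ∈ g w := by
  induction w using FreeMonoid.inductionOn' with
  | one => simp only [map_one, Set.mem_one]
  | of_mul a w ih =>
    rw [map_mul, map_mul]
    exact Set.mul_mem_mul (h a) ih

section Trace

variable {α : Type} {θ : α → α → Prop}

theorem phi_surjective : Function.Surjective (phi θ) := Con.mk'_surjective

theorem commute_phi_of {a b : α} (h : θ a b) :
    Commute (phi θ (.of a)) (phi θ (.of b)) := by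
  simp only [Commute, SemiconjBy, ← map_mul]
  exact (Con.eq _).mpr (ConGen.Rel.of _ _ ⟨a, b, h, rfl, rfl⟩)

theorem commute_phi_of_of_forall_mem {c : α} {w : FreeMonoid α} (h : ∀ x ∈ w, θ c x) :
    Commute (phi θ (.of c)) (phi θ w) := by
  induction w using FreeMonoid.inductionOn' with
  | one => rw [map_one]; exact Commute.one_right _
  | of_mul a w ih =>
    rw [map_mul]
    exact (commute_phi_of (h a (FreeMonoid.mem_mul.mpr (.inl FreeMonoid.mem_of_self)))).mul_right
      (ih fun x hx => h x (FreeMonoid.mem_mul.mpr (.inr hx)))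

def TraceMonoid.lift {M : Type*} [Monoid M] (f : FreeMonoid α →* M)
    (hf : ∀ a b, θ a b → Commute (f (.of a)) (f (.of b))) : TraceMonoid θ →* M :=
  (traceCon θ).lift f <| Con.conGen_le.mpr <| by
    rintro _ _ ⟨a, b, hab, rfl, rfl⟩
    simpa only [Con.ker_rel, map_mul] using (hf a b hab).eq

@[simp]
theorem TraceMonoid.lift_phi {M : Type*} [Monoid M] (f : FreeMonoid α →* M)
    (hf : ∀ a b, θ a b → Commute (f (.of a)) (f (.of b))) (w : FreeMonoid α) :
    TraceMonoid.lift f hf (phi θ w) = f w :=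
  Con.lift_mk' _ w

end Trace

/-- The pair `(alph t, TA t)` of a trace `t`: a terminal letter of `u` stays terminal in `u * v`
exactly when it is independent of every letter of `v`. -/
@[ext]
structure AlphData {α : Type} (θ : α → α → Prop) : Type where
  alph : Set α
  terminal : Set α

namespace AlphData

variable {α : Type} {θ : α → α → Prop}

instance : Mul (AlphData θ) :=
  ⟨fun m n => ⟨m.alph ∪ n.alph, n.terminal ∪ {x ∈ m.terminal | ∀ y ∈ n.alph, θ x y}⟩⟩

instance : One (AlphData θ) := ⟨⟨∅, ∅⟩⟩

@[simp] theorem alph_mul (m n : AlphData θ) : (m * n).alph = m.alph ∪ n.alph := rfl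

@[simp] theorem terminal_mul (m n : AlphData θ) :
    (m * n).terminal = n.terminal ∪ {x ∈ m.terminal | ∀ y ∈ n.alph, θ x y} := rfl

@[simp] theorem alph_one : (1 : AlphData θ).alph = ∅ := rfl

@[simp] theorem terminal_one : (1 : AlphData θ).terminal = ∅ := rfl

instance : Monoid (AlphData θ) where
  mul_assoc m n p := by
    ext x <;> simp only [alph_mul, terminal_mul, Set.mem_union, Set.mem_ofPred_eq, or_imp,
      forall_and] <;> tauto
  one_mul m := by ext x <;> simp
  mul_one m := by ext x <;> simp

instance [Finite α] : Finite (AlphData θ) :=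
  Finite.of_injective (fun m => (m.alph, m.terminal)) fun m n h => by
    simpa [AlphData.ext_iff] using h

def of (θ : α → α → Prop) (a : α) : AlphData θ := ⟨{a}, {a}⟩

theorem commute_of {a b : α} (hab : θ a b) (hba : θ b a) : Commute (of θ a) (of θ b) := by
  refine AlphData.ext (Set.union_comm _ _) ?_
  ext x
  simp only [of, terminal_mul, Set.mem_union, Set.mem_ofPred_eq, Set.mem_singleton_iff,
    forall_eq]
  constructor <;> rintro (rfl | ⟨rfl, -⟩) <;> simp [hab, hba]

end AlphData

section AlphHom

variable {α : Type} {θ : α → α → Prop}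

variable (θ) in
def alphHom : FreeMonoid α →* AlphData θ := FreeMonoid.lift (AlphData.of θ)

@[simp] theorem alphHom_of (a : α) : alphHom θ (.of a) = AlphData.of θ a := rfl

theorem alph_alphHom (w : FreeMonoid α) : (alphHom θ w).alph = {x | x ∈ w} := by
  induction w using FreeMonoid.inductionOn' with
  | one => ext x; simp [FreeMonoid.notMem_one]
  | of_mul a w ih =>
    ext x
    simp [AlphData.of, ih, FreeMonoid.mem_mul, FreeMonoid.mem_of]

theorem mem_terminal_alphHom_mul_of (w : FreeMonoid α) (x : α) :
    x ∈ (alphHom θ (w * .of x)).terminal := by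
  simp [AlphData.of]

theorem exists_phi_eq_mul_of_mem_terminal {w : FreeMonoid α} {x : α}
    (hx : x ∈ (alphHom θ w).terminal) : ∃ u, phi θ w = u * phi θ (.of x) := by
  induction w using FreeMonoid.inductionOn' with
  | one => simp at hx
  | of_mul a w ih =>
    simp only [map_mul, alphHom_of, AlphData.terminal_mul, AlphData.of, Set.mem_union,
      Set.mem_ofPred_eq, Set.mem_singleton_iff, alph_alphHom] at hx
    rcases hx with hx | ⟨rfl, hindep⟩
    · obtain ⟨u, hu⟩ := ih hx
      exact ⟨phi θ (.of a) * u, by rw [map_mul, hu, mul_assoc]⟩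
    · exact ⟨phi θ w, by rw [map_mul, (commute_phi_of_of_forall_mem hindep).eq]⟩

end AlphHom

namespace TraceMonoid

variable {α : Type} {θ : α → α → Prop} (hsymm : ∀ x y, θ x y → θ y x)

def alphData : TraceMonoid θ →* AlphData θ :=
  lift (alphHom θ) fun a b h => AlphData.commute_of h (hsymm a b h)

@[simp]
theorem alphData_phi (w : FreeMonoid α) : alphData hsymm (phi θ w) = alphHom θ w :=
  lift_phi _ _ w

theorem TA_eq_terminal (t : TraceMonoid θ) : TA θ t = (alphData hsymm t).terminal := by
  obtain ⟨w, rfl⟩ := phi_surjective t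
  ext x
  constructor
  · rintro ⟨u, hu⟩
    obtain ⟨v, rfl⟩ := phi_surjective u
    rw [hu, ← map_mul, alphData_phi]
    exact mem_terminal_alphHom_mul_of v x
  · rw [alphData_phi]
    exact exists_phi_eq_mul_of_mem_terminal

theorem eq_one_iff_alph_eq_empty (t : TraceMonoid θ) :
    t = 1 ↔ (alphData hsymm t).alph = ∅ := by
  obtain ⟨w, rfl⟩ := phi_surjective t
  refine ⟨fun h => by rw [h, map_one]; rfl, fun h => ?_⟩
  rw [alphData_phi, alph_alphHom, Set.eq_empty_iff_forall_notMem] at h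
  cases w using FreeMonoid.casesOn with
  | one => exact map_one _
  | of_mul a w => exact absurd (FreeMonoid.mem_mul.mpr (.inl FreeMonoid.mem_of_self)) (h a)

theorem mem_leftFactor_and_ne_one_iff (B : Set α) (t : TraceMonoid θ) :
    (t ∈ leftFactor θ B ∧ t ≠ 1) ↔
      (alphData hsymm t).terminal ∩ B = ∅ ∧ (alphData hsymm t).alph ≠ ∅ := by
  rw [leftFactor, Set.mem_ofPred_eq, TA_eq_terminal hsymm, ne_eq, eq_one_iff_alph_eq_empty hsymm]

end TraceMonoid

/-- A red/blue colouring of the letters of a word, recorded by the data of its red and of its blue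
subword; it is admissible when every blue letter is independent of every later red letter. -/
@[ext]
structure Coloring {α : Type} (θ : α → α → Prop) : Type where
  red : AlphData θ
  blue : AlphData θ
  admissible : Prop

namespace Coloring

variable {α : Type} {θ : α → α → Prop}

instance : Mul (Coloring θ) :=
  ⟨fun k l => ⟨k.red * l.red, k.blue * l.blue,
    k.admissible ∧ l.admissible ∧ ∀ x ∈ k.blue.alph, ∀ y ∈ l.red.alph, θ x y⟩⟩

instance : One (Coloring θ) := ⟨⟨1, 1, True⟩⟩

@[simp] theorem red_mul (k l : Coloring θ) : (k * l).red = k.red * l.red := rfl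

@[simp] theorem blue_mul (k l : Coloring θ) : (k * l).blue = k.blue * l.blue := rfl

@[simp] theorem admissible_mul (k l : Coloring θ) : (k * l).admissible =
    (k.admissible ∧ l.admissible ∧ ∀ x ∈ k.blue.alph, ∀ y ∈ l.red.alph, θ x y) := rfl

@[simp] theorem red_one : (1 : Coloring θ).red = 1 := rfl

@[simp] theorem blue_one : (1 : Coloring θ).blue = 1 := rfl

@[simp] theorem admissible_one : (1 : Coloring θ).admissible = True := rfl

instance : Monoid (Coloring θ) where
  mul_assoc k l m := by
    refine Coloring.ext (mul_assoc _ _ _) (mul_assoc _ _ _) ?_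
    simp only [admissible_mul, red_mul, blue_mul, AlphData.alph_mul, Set.mem_union, or_imp,
      forall_and, eq_iff_iff]
    tauto
  one_mul k := Coloring.ext (one_mul _) (one_mul _) (by simp)
  mul_one k := Coloring.ext (mul_one _) (mul_one _) (by simp)

instance [Finite α] : Finite (Coloring θ) :=
  Finite.of_injective (fun k => (k.red, k.blue, k.admissible)) fun k l h => by
    simpa [Coloring.ext_iff] using h

def ofRed : AlphData θ →* Coloring θ where
  toFun m := ⟨m, 1, True⟩
  map_one' := rfl
  map_mul' m n := Coloring.ext rfl (mul_one 1).symm (by simp)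

def ofBlue : AlphData θ →* Coloring θ where
  toFun m := ⟨1, m, True⟩
  map_one' := rfl
  map_mul' m n := Coloring.ext (mul_one 1).symm rfl (by simp)

theorem ofRed_mul_ofBlue (m n : AlphData θ) : ofRed m * ofBlue n = ⟨m, n, True⟩ :=
  Coloring.ext (mul_one m) (one_mul n) (by simp [ofRed, ofBlue])

theorem ofBlue_mul_ofRed (m n : AlphData θ) :
    ofBlue m * ofRed n = ⟨n, m, ∀ x ∈ m.alph, ∀ y ∈ n.alph, θ x y⟩ :=
  Coloring.ext (one_mul n) (mul_one m) (by simp [ofRed, ofBlue])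

theorem commute_ofRed_ofBlue {m n : AlphData θ} (h : ∀ x ∈ n.alph, ∀ y ∈ m.alph, θ x y) :
    Commute (ofRed m) (ofBlue n) := by
  simp only [Commute, SemiconjBy, ofRed_mul_ofBlue, ofBlue_mul_ofRed, Coloring.mk.injEq,
    true_and]
  exact (eq_true h).symm

end Coloring

section ColorHom

open Coloring

variable {α : Type} {θ : α → α → Prop}

variable (θ) in
def colorHom : FreeMonoid α →* Set (Coloring θ) :=
  FreeMonoid.lift fun a => {ofRed (AlphData.of θ a), ofBlue (AlphData.of θ a)}

theorem commute_colorHom_of {a b : α} (hab : θ a b) (hba : θ b a) :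
    Commute (colorHom θ (.of a)) (colorHom θ (.of b)) := by
  have hc := AlphData.commute_of hab hba
  refine Set.mul_comm_of_forall_commute ?_
  simp only [colorHom, FreeMonoid.lift_eval_of, Set.mem_insert_iff, Set.mem_singleton_iff]
  rintro _ (rfl | rfl) _ (rfl | rfl)
  · exact hc.map ofRed
  · exact commute_ofRed_ofBlue (by simp [AlphData.of, hba])
  · exact (commute_ofRed_ofBlue (by simp [AlphData.of, hab])).symm
  · exact hc.map ofBlue

theorem ofRed_alphHom_mem_colorHom (w : FreeMonoid α) : ofRed (alphHom θ w) ∈ colorHom θ w :=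
  FreeMonoid.apply_mem_of_forall_of_mem (f := ofRed.comp (alphHom θ))
    (fun _ => Set.mem_insert _ _) w

theorem ofBlue_alphHom_mem_colorHom (w : FreeMonoid α) : ofBlue (alphHom θ w) ∈ colorHom θ w :=
  FreeMonoid.apply_mem_of_forall_of_mem (f := ofBlue.comp (alphHom θ))
    (fun _ => Set.mem_insert_of_mem _ rfl) w

theorem exists_phi_eq_mul_of_mem_colorHom {w : FreeMonoid α} {k : Coloring θ}
    (hk : k ∈ colorHom θ w) (hadm : k.admissible) :
    ∃ u v, phi θ w = phi θ u * phi θ v ∧ alphHom θ u = k.red ∧ alphHom θ v = k.blue := by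
  induction w using FreeMonoid.inductionOn' generalizing k with
  | one =>
    obtain rfl : k = 1 := by simpa using hk
    exact ⟨1, 1, by simp, rfl, rfl⟩
  | of_mul c w ih =>
    rw [map_mul] at hk
    obtain ⟨k₁, hk₁, k₂, hk₂, rfl⟩ := hk
    obtain ⟨-, hadm₂, hindep⟩ := hadm
    obtain ⟨u, v, hw, hu, hv⟩ := ih hk₂ hadm₂
    simp only [colorHom, FreeMonoid.lift_eval_of, Set.mem_insert_iff,
      Set.mem_singleton_iff] at hk₁
    rcases hk₁ with rfl | rfl
    · refine ⟨.of c * u, v, ?_, by simp [hu, ofRed], by simp [hv, ofRed]⟩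
      rw [map_mul, hw, map_mul, mul_assoc]
    · have hcu : Commute (phi θ (.of c)) (phi θ u) :=
        commute_phi_of_of_forall_mem fun y hy =>
          hindep c rfl y (by simpa [← hu, alph_alphHom] using hy)
      refine ⟨u, .of c * v, ?_, by simp [hu, ofBlue], by simp [hv, ofBlue]⟩
      rw [map_mul, hw, ← mul_assoc, hcu.eq, mul_assoc, ← map_mul]

end ColorHom

namespace TraceMonoid

open Coloring

variable {α : Type} {θ : α → α → Prop} (hsymm : ∀ x y, θ x y → θ y x)

def colorings : TraceMonoid θ →* Set (Coloring θ) :=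
  lift (colorHom θ) fun a b h => commute_colorHom_of h (hsymm a b h)

@[simp]
theorem colorings_phi (w : FreeMonoid α) : colorings hsymm (phi θ w) = colorHom θ w :=
  lift_phi _ _ w

theorem exists_mul_eq_iff_exists_mem_colorings (t : TraceMonoid θ)
    (p : AlphData θ → AlphData θ → Prop) :
    (∃ a b, a * b = t ∧ p (alphData hsymm a) (alphData hsymm b)) ↔
      ∃ k ∈ colorings hsymm t, k.admissible ∧ p k.red k.blue := by
  obtain ⟨w, rfl⟩ := phi_surjective t
  constructor
  · rintro ⟨a, b, hab, hp⟩
    obtain ⟨u, rfl⟩ := phi_surjective a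
    obtain ⟨v, rfl⟩ := phi_surjective b
    refine ⟨ofRed (alphHom θ u) * ofBlue (alphHom θ v), ?_, ?_⟩
    · rw [← hab, ← map_mul, colorings_phi, map_mul]
      exact Set.mul_mem_mul (ofRed_alphHom_mem_colorHom u) (ofBlue_alphHom_mem_colorHom v)
    · rw [ofRed_mul_ofBlue]
      simpa using hp
  · rintro ⟨k, hk, hadm, hp⟩
    rw [colorings_phi] at hk
    obtain ⟨u, v, hw, hu, hv⟩ := exists_phi_eq_mul_of_mem_colorHom hk hadm
    exact ⟨phi θ u, phi θ v, hw.symm, by simpa [hu, hv] using hp⟩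

end TraceMonoid

open TraceMonoid in
theorem rep_generating_set_regular_general {α : Type} [Fintype α] (θ : α → α → Prop)
    (hsymm : ∀ x y, θ x y → θ y x) (B : Set α) :
    Language.IsRegular
      {w : List α | phi θ (FreeMonoid.ofList w) ∈
        {t : TraceMonoid θ | t ∈ leftFactor θ B ∧ t ≠ 1 ∧
          ¬∃ a b : TraceMonoid θ, a ∈ leftFactor θ B ∧ b ∈ leftFactor θ B ∧
            a ≠ 1 ∧ b ≠ 1 ∧ a * b = t}} := by
  let good (m : AlphData θ) : Prop := m.terminal ∩ B = ∅ ∧ m.alph ≠ ∅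
  have hgood (t : TraceMonoid θ) : (t ∈ leftFactor θ B ∧ t ≠ 1) ↔ good (alphData hsymm t) :=
    mem_leftFactor_and_ne_one_iff hsymm B t
  have hgen (t : TraceMonoid θ) : (t ∈ leftFactor θ B ∧ t ≠ 1 ∧
      ¬∃ a b, a ∈ leftFactor θ B ∧ b ∈ leftFactor θ B ∧ a ≠ 1 ∧ b ≠ 1 ∧ a * b = t) ↔
      good (alphData hsymm t) ∧
        ¬∃ k ∈ colorings hsymm t, k.admissible ∧ good k.red ∧ good k.blue := by
    rw [← exists_mul_eq_iff_exists_mem_colorings hsymm t fun m n => good m ∧ good n,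
      ← and_assoc, hgood]
    refine and_congr_right' (not_congr (exists₂_congr fun a b => ?_))
    rw [← hgood, ← hgood]
    tauto
  exact .of_monoidHom (((alphData hsymm).prod (colorings hsymm)).comp (phi θ))
    {s | good s.1 ∧ ¬∃ k ∈ s.2, k.admissible ∧ good k.red ∧ good k.blue} fun w => hgen _

/-- the language `Rep(G(L))` of words representing traces in the
minimal generating set `G(L) = (L \ {1}) \ (L \ {1})²` of the left Lazard factor
is regular. -/
theorem rep_generating_set_regular {α : Type} [Fintype α] (θ : α → α → Prop)
    (hrefl : ∀ x, θ x x) (hsymm : ∀ x y, θ x y → θ y x) (B : Set α) :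
    Language.IsRegular
      {w : List α | phi θ (FreeMonoid.ofList w) ∈
        {t : TraceMonoid θ | t ∈ leftFactor θ B ∧ t ≠ 1 ∧
          ¬∃ a b : TraceMonoid θ, a ∈ leftFactor θ B ∧ b ∈ leftFactor θ B ∧
            a ≠ 1 ∧ b ≠ 1 ∧ a * b = t}} :=
  rep_generating_set_regular_general θ hsymm B
end
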